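/- Monomials over the non-jumping Newton polyhedron satisfy the valuative inequality: Let v, v' ∈ ℕ^m, a, a' ∈ (ℂ^*)^m, and ψ_k, ψ'_k ∈ ℂ⟦t⟧ with zero constant term; set φ_k = a_k t^{v_k}(1+ψ_k) and φ'_k = a'_k t^{v'_k}(1+ψ'_k). Let p_1,…,p_n ∈ ℕ^m and define M := { i ∈ {1,…,n} : ord(φ^{p_i} − (φ')^{p_i}) = min(⟨p_i,v⟩, ⟨p_i,v'⟩) }. If q ∈ ℕ^m lies (as a point of ℝ^m) in the Newton polyhedron N(p_i | i ∈ M), then ord(φ^q − (φ')^q) ≥ min_{1≤i≤n} ord(φ^{p_i} − (φ')^{p_i}). -/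

import Mathlib

/-! Every product `∏ φ k ^ r k` has order at least `⟨r, v⟩`, so `ord(φ ^ r - φ' ^ r)` is at
least `min(⟨r, v⟩, ⟨r, v'⟩)` for every `r`. A point `q` of the Newton polyhedron of the
non-jumping exponents satisfies `⟨p i, w⟩ ≤ ⟨q, w⟩` for some non-jumping `i`, for each weight
`w ≥ 0` (a half-space containing the polyhedron's generators contains its convex hull). Taking
`w` to be whichever of `v`, `v'` realises `min(⟨q, v⟩, ⟨q, v'⟩)`, the order at `i`, which equals
`min(⟨p i, v⟩, ⟨p i, v'⟩)`, is at most that bound. -/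

open PowerSeries Finset

namespace PowerSeries

variable {R : Type*}

theorem min_order_le_order_sub [Ring R] (f g : R⟦X⟧) :
    min f.order g.order ≤ (f - g).order := by
  simpa [sub_eq_add_neg, order_neg] using min_order_le_order_add f (-g)

theorem le_order_C_mul_X_pow_mul [Semiring R] (a : R) (n : ℕ) (f : R⟦X⟧) :
    (n : ℕ∞) ≤ (C a * X ^ n * f).order :=
  calc (n : ℕ∞) ≤ (X ^ n : R⟦X⟧).order :=
        nat_le_order _ _ fun i hi => by simp [coeff_X_pow, hi.ne]
    _ ≤ (C a).order + (X ^ n).order + f.order := le_add_self.trans le_self_add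
    _ ≤ _ := (add_le_add_left (le_order_mul _ _) _).trans (le_order_mul _ _)

variable {σ : Type*} [Fintype σ]

theorem dotProduct_le_order_prod_pow [CommSemiring R] {f : σ → R⟦X⟧} {w : σ → ℕ}
    (hf : ∀ k, (w k : ℕ∞) ≤ (f k).order) (r : σ → ℕ) :
    ((r ⬝ᵥ w : ℕ) : ℕ∞) ≤ (∏ k, f k ^ r k).order :=
  calc ((r ⬝ᵥ w : ℕ) : ℕ∞) = ∑ k, r k • (w k : ℕ∞) := by simp [dotProduct]
    _ ≤ ∑ k, (f k ^ r k).order :=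
      sum_le_sum fun k _ => (nsmul_le_nsmul_right (hf k) _).trans (le_order_pow _ _)
    _ ≤ _ := le_order_prod _ _

theorem min_dotProduct_le_order_prod_pow_sub [CommRing R] {f g : σ → R⟦X⟧}
    {v v' : σ → ℕ}
    (hf : ∀ k, (v k : ℕ∞) ≤ (f k).order) (hg : ∀ k, (v' k : ℕ∞) ≤ (g k).order)
    (r : σ → ℕ) :
    ((min (r ⬝ᵥ v) (r ⬝ᵥ v') : ℕ) : ℕ∞) ≤ (∏ k, f k ^ r k - ∏ k, g k ^ r k).order := by
  grw [← min_order_le_order_sub, ← dotProduct_le_order_prod_pow hf,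
    ← dotProduct_le_order_prod_pow hg]
  simp

end PowerSeries

section NewtonPolyhedron

variable {ι σ : Type*}

def newtonPolyhedron (p : ι → σ → ℕ) (S : Set ι) : Set (σ → ℝ) :=
  convexHull ℝ (⋃ i ∈ S, {x | ∀ k, (p i k : ℝ) ≤ x k})

variable [Fintype σ] {p : ι → σ → ℕ} {S : Set ι} {q : σ → ℕ}

theorem exists_dotProduct_le_of_mem_convexHull
    (hq : (fun k => (q k : ℝ)) ∈ newtonPolyhedron p S)
    (w : σ → ℕ) : ∃ i ∈ S, p i ⬝ᵥ w ≤ q ⬝ᵥ w := by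
  have hS : S.Nonempty := by
    contrapose! hq
    simp [newtonPolyhedron, hq]
  obtain ⟨i, hi, hmin⟩ : ∃ i ∈ S, ∀ j ∈ S, p i ⬝ᵥ w ≤ p j ⬝ᵥ w :=
    ⟨_, Function.argminOn_mem _ S hS, fun j hj => Function.argminOn_le (p · ⬝ᵥ w) S hj⟩
  refine ⟨i, hi, ?_⟩
  set H := {x : σ → ℝ | ((p i ⬝ᵥ w : ℕ) : ℝ) ≤ x ⬝ᵥ (fun k => (w k : ℝ))}
  have hH : Convex ℝ H :=
    convex_halfSpace_ge ⟨fun x y => add_dotProduct x y _, fun c x => smul_dotProduct c x _⟩ _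
  have hsub : (⋃ j ∈ S, {x : σ → ℝ | ∀ k, (p j k : ℝ) ≤ x k}) ⊆ H := by
    simp only [Set.iUnion_subset_iff]
    intro j hj x hx
    calc ((p i ⬝ᵥ w : ℕ) : ℝ) ≤ (p j ⬝ᵥ w : ℕ) := by exact_mod_cast hmin j hj
      _ ≤ x ⬝ᵥ (fun k => (w k : ℝ)) := by
        push_cast [dotProduct]
        gcongr with k
        exact hx k
  have := convexHull_min hsub hH hq
  simp only [H, Set.mem_ofPred_eq, dotProduct] at this
  exact_mod_cast this

theorem exists_min_dotProduct_le_of_mem_convexHull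
    (hq : (fun k => (q k : ℝ)) ∈ newtonPolyhedron p S)
    (v v' : σ → ℕ) : ∃ i ∈ S, min (p i ⬝ᵥ v) (p i ⬝ᵥ v') ≤ min (q ⬝ᵥ v) (q ⬝ᵥ v') := by
  rcases le_total (q ⬝ᵥ v) (q ⬝ᵥ v') with h | h
  · obtain ⟨i, hi, hle⟩ := exists_dotProduct_le_of_mem_convexHull hq v
    exact ⟨i, hi, min_le_of_left_le (hle.trans (le_min le_rfl h))⟩
  · obtain ⟨i, hi, hle⟩ := exists_dotProduct_le_of_mem_convexHull hq v'
    exact ⟨i, hi, min_le_of_right_le (hle.trans (le_min h le_rfl))⟩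

end NewtonPolyhedron

theorem order_ge_of_mem_newtonPolyhedron_of_nonjumping_general
    {m n : ℕ} (v v' : Fin m → ℕ) (a a' : Fin m → ℂˣ)
    (ψ ψ' : Fin m → PowerSeries ℂ)
    (φ φ' : Fin m → PowerSeries ℂ)
    (hφ : ∀ k, φ k = PowerSeries.C (a k : ℂ) * PowerSeries.X ^ v k * (1 + ψ k))
    (hφ' : ∀ k, φ' k = PowerSeries.C (a' k : ℂ) * PowerSeries.X ^ v' k * (1 + ψ' k))
    (p : Fin n → (Fin m → ℕ))
    (M : Set (Fin n))
    (hM : M = {i : Fin n |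
        PowerSeries.order ((∏ k, φ k ^ p i k) - ∏ k, φ' k ^ p i k) =
          (min (∑ k, p i k * v k) (∑ k, p i k * v' k) : ℕ∞)})
    (q : Fin m → ℕ)
    (hq : (fun k => (q k : ℝ)) ∈
        convexHull ℝ (⋃ i ∈ M, {x : Fin m → ℝ | ∀ k, (p i k : ℝ) ≤ x k})) :
    Finset.univ.inf (fun i : Fin n =>
        PowerSeries.order ((∏ k, φ k ^ p i k) - ∏ k, φ' k ^ p i k)) ≤
      PowerSeries.order ((∏ k, φ k ^ q k) - ∏ k, φ' k ^ q k) := by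
  have hv : ∀ k, (v k : ℕ∞) ≤ (φ k).order := fun k => hφ k ▸ le_order_C_mul_X_pow_mul _ _ _
  have hv' : ∀ k, (v' k : ℕ∞) ≤ (φ' k).order := fun k => hφ' k ▸ le_order_C_mul_X_pow_mul _ _ _
  obtain ⟨i, hiM, hi⟩ := exists_min_dotProduct_le_of_mem_convexHull hq v v'
  rw [hM] at hiM
  calc univ.inf (fun i => ((∏ k, φ k ^ p i k) - ∏ k, φ' k ^ p i k).order)
      ≤ ((∏ k, φ k ^ p i k) - ∏ k, φ' k ^ p i k).order := inf_le (mem_univ i)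
    _ = ((min (p i ⬝ᵥ v) (p i ⬝ᵥ v') : ℕ) : ℕ∞) := by
        simp [hiM.out, Nat.mono_cast.map_min, dotProduct]
    _ ≤ ((min (q ⬝ᵥ v) (q ⬝ᵥ v') : ℕ) : ℕ∞) := by exact_mod_cast hi
    _ ≤ _ := min_dotProduct_le_order_prod_pow_sub hv hv' q

/-- **Monomials over the non-jumping Newton polyhedron satisfy the valuative
inequality.**  With arcs `φ k = a k • t ^ (v k) * (1 + ψ k)` and
`φ' k = a' k • t ^ (v' k) * (1 + ψ' k)`, let `M` be the set of indices `i` for which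
the order of `φ ^ (p i) − (φ') ^ (p i)` does not jump, i.e. equals
`min(⟨p i, v⟩, ⟨p i, v'⟩)`.  If `q ∈ ℕ^m` lies in the Newton polyhedron
`N(p i | i ∈ M)`, then `ord(φ ^ q − (φ') ^ q) ≥ min_i ord(φ ^ (p i) − (φ') ^ (p i))`. -/
theorem order_ge_of_mem_newtonPolyhedron_of_nonjumping
    {m n : ℕ} (v v' : Fin m → ℕ) (a a' : Fin m → ℂˣ)
    (ψ ψ' : Fin m → PowerSeries ℂ)
    (hψ : ∀ k, PowerSeries.constantCoeff (ψ k) = 0)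
    (hψ' : ∀ k, PowerSeries.constantCoeff (ψ' k) = 0)
    (φ φ' : Fin m → PowerSeries ℂ)
    (hφ : ∀ k, φ k = PowerSeries.C (a k : ℂ) * PowerSeries.X ^ v k * (1 + ψ k))
    (hφ' : ∀ k, φ' k = PowerSeries.C (a' k : ℂ) * PowerSeries.X ^ v' k * (1 + ψ' k))
    (p : Fin n → (Fin m → ℕ))
    (M : Set (Fin n))
    (hM : M = {i : Fin n |
        PowerSeries.order ((∏ k, φ k ^ p i k) - ∏ k, φ' k ^ p i k) =
          (min (∑ k, p i k * v k) (∑ k, p i k * v' k) : ℕ∞)})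
    (q : Fin m → ℕ)
    (hq : (fun k => (q k : ℝ)) ∈
        convexHull ℝ (⋃ i ∈ M, {x : Fin m → ℝ | ∀ k, (p i k : ℝ) ≤ x k})) :
    Finset.univ.inf (fun i : Fin n =>
        PowerSeries.order ((∏ k, φ k ^ p i k) - ∏ k, φ' k ^ p i k)) ≤
      PowerSeries.order ((∏ k, φ k ^ q k) - ∏ k, φ' k ^ q k) :=
  order_ge_of_mem_newtonPolyhedron_of_nonjumping_general v v' a a' ψ ψ' φ φ' hφ hφ' p M hM q hq
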